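/- arXiv:0904.0068 — 6 statements merged into one kernel-verified Lean document; each statement's English description precedes it below -/
import Mathlib

section
/- Let A be an m×n real matrix and s ≥ 1 an integer. If A is s-semigood, then for every subset J of {1,…,n} with Card(J) ≤ s and every nonzero x in the kernel of A such that x_i ≤ 0 for all i ∈ P_+ ∖ J, one has Σ_{i∈J∩P_+} x_i + Σ_{i∈J∩P_n} |x_i| < Σ_{i∉J} |x_i|. -/
/-! Given `x ∈ ker A` that is nonpositive on `P₊ \ J`, split `x = w - z` where `w` keeps `x` on `J`
(only its positive part on `J ∩ P₊`) and vanishes off `J`. Then `w` is `s`-sparse, both `w` and `z`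
are nonnegative on `P₊`, `A z = A w`, and `z ≠ w` because `x ≠ 0`. Semigoodness therefore forces
`‖w‖₁ < ‖z‖₁`, and comparing the two norms coordinate by coordinate gives the inequality. -/

open Finset

noncomputable def normS1 {n : ℕ} (s : ℕ) (x : Fin n → ℝ) : ℝ :=
  (Finset.univ.powerset.filter (fun J : Finset (Fin n) => J.card ≤ s)).sup'
    ⟨∅, by simp⟩ (fun J => ∑ i ∈ J, |x i|)

noncomputable def dualNorm {m : ℕ} (N : (Fin m → ℝ) → ℝ) (v : Fin m → ℝ) : ℝ :=
  sSup {r : ℝ | ∃ x : Fin m → ℝ, N x ≤ 1 ∧ r = ∑ k, v k * x k}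

def IsNorm {m : ℕ} (N : (Fin m → ℝ) → ℝ) : Prop :=
  (∀ x y, N (x + y) ≤ N x + N y) ∧ (∀ (c : ℝ) (x), N (c • x) = |c| * N x) ∧
  (∀ x, N x = 0 → x = 0)

def SemiGood {m n : ℕ} (A : Matrix (Fin m) (Fin n) ℝ) (Pplus : Finset (Fin n)) (s : ℕ) : Prop :=
  ∀ w : Fin n → ℝ,
    (Finset.univ.filter (fun i => w i ≠ 0)).card ≤ s →
    (∀ i ∈ Pplus, 0 ≤ w i) →
    ∀ z : Fin n → ℝ, A.mulVec z = A.mulVec w → (∀ i ∈ Pplus, 0 ≤ z i) →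
      (∑ i, |z i|) ≤ (∑ i, |w i|) → z = w

def SGCond {m n : ℕ} (A : Matrix (Fin m) (Fin n) ℝ) (Pplus : Finset (Fin n))
    (s : ℕ) (ξ θ : ℝ) : Prop :=
  ∀ x : Fin n → ℝ, A.mulVec x = 0 → ∀ J : Finset (Fin n), J.card ≤ s →
    ∑ i ∈ J ∩ Pplus, x i + ∑ i ∈ J ∩ Pplusᶜ, |x i| ≤
      ξ * (∑ i ∈ Pplusᶜ \ J, |x i| + ∑ i ∈ Pplus \ J, max (-x i) (θ * x i))

def SGbCond {m n : ℕ} (A : Matrix (Fin m) (Fin n) ℝ) (Pplus : Finset (Fin n))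
    (s : ℕ) (ξ θ β : ℝ) (N : (Fin m → ℝ) → ℝ) : Prop :=
  ∀ x : Fin n → ℝ, ∀ J : Finset (Fin n), J.card ≤ s →
    ∑ i ∈ J ∩ Pplus, x i + ∑ i ∈ J ∩ Pplusᶜ, |x i| ≤
      β * N (A.mulVec x) +
        ξ * (∑ i ∈ Pplusᶜ \ J, |x i| + ∑ i ∈ Pplus \ J, max (-x i) (θ * x i))

def SGbCondSign {m n : ℕ} (A : Matrix (Fin m) (Fin n) ℝ) (Pplus : Finset (Fin n))
    (s : ℕ) (ξ β : ℝ) (N : (Fin m → ℝ) → ℝ) : Prop :=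
  ∀ J : Finset (Fin n), J.card ≤ s →
    ∀ x : Fin n → ℝ, (∀ i ∈ Pplus \ J, x i ≤ 0) →
      ∑ i ∈ J ∩ Pplus, x i + ∑ i ∈ J ∩ Pplusᶜ, |x i| ≤
        β * N (A.mulVec x) + ξ * ∑ i ∈ Jᶜ, |x i|

noncomputable def Phi {n : ℕ} (Pplus : Finset (Fin n)) (s : ℕ) (ξ θ : ℝ)
    (x : Fin n → ℝ) : ℝ :=
  normS1 s (fun i => if i ∈ Pplus then (1 + θ * ξ) * max (x i) 0 else (1 + ξ) * |x i|)

def VSGCert {m n : ℕ} (A : Matrix (Fin m) (Fin n) ℝ) (Pplus : Finset (Fin n))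
    (s : ℕ) (ξ θ ρ σ : ℝ) (N : (Fin m → ℝ) → ℝ)
    (Y : Matrix (Fin m) (Fin n) ℝ) (v : Fin m → ℝ) : Prop :=
  (∀ i, Phi Pplus s ξ θ (fun j => -((1 - Y.transpose * A : Matrix (Fin n) (Fin n) ℝ) j i)) + (A.transpose.mulVec v) i ≤ ξ) ∧
  (∀ i ∉ Pplus, Phi Pplus s ξ θ (fun j => (1 - Y.transpose * A : Matrix (Fin n) (Fin n) ℝ) j i) - (A.transpose.mulVec v) i ≤ ξ) ∧
  (∀ i ∈ Pplus, Phi Pplus s ξ θ (fun j => (1 - Y.transpose * A : Matrix (Fin n) (Fin n) ℝ) j i) - (A.transpose.mulVec v) i ≤ θ * ξ) ∧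
  (∀ i, dualNorm N (fun k => Y k i) ≤ σ) ∧
  dualNorm N v ≤ ρ

def VSG {m n : ℕ} (A : Matrix (Fin m) (Fin n) ℝ) (Pplus : Finset (Fin n))
    (s : ℕ) (ξ θ ρ σ : ℝ) (N : (Fin m → ℝ) → ℝ) : Prop :=
  ∃ (Y : Matrix (Fin m) (Fin n) ℝ) (v : Fin m → ℝ), VSGCert A Pplus s ξ θ ρ σ N Y v

def VSGbarCert {m n : ℕ} (A : Matrix (Fin m) (Fin n) ℝ) (Pplus : Finset (Fin n))
    (s : ℕ) (ξ σ θ : ℝ) (N : (Fin m → ℝ) → ℝ) (Y : Matrix (Fin m) (Fin n) ℝ) : Prop :=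
  (∀ i, dualNorm N (fun k => Y k i) ≤ σ) ∧
  (∀ i ∉ Pplus, ∀ j, |(1 - Y.transpose * A : Matrix (Fin n) (Fin n) ℝ) i j| ≤ ξ / ((1 + ξ) * s)) ∧
  (∀ i ∈ Pplus, ∀ j ∉ Pplus,
    -(ξ / ((1 + ξ * θ) * s)) ≤ (1 - Y.transpose * A : Matrix (Fin n) (Fin n) ℝ) i j ∧
      (1 - Y.transpose * A : Matrix (Fin n) (Fin n) ℝ) i j ≤ ξ / ((1 + ξ * θ) * s)) ∧
  (∀ i ∈ Pplus, ∀ j ∈ Pplus,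
    -(ξ / ((1 + ξ * θ) * s)) ≤ (1 - Y.transpose * A : Matrix (Fin n) (Fin n) ℝ) i j ∧
      (1 - Y.transpose * A : Matrix (Fin n) (Fin n) ℝ) i j ≤ ξ * θ / ((1 + ξ * θ) * s))

open Matrix

theorem SemiGood.sum_abs_lt {m n : ℕ} {A : Matrix (Fin m) (Fin n) ℝ} {Pplus : Finset (Fin n)}
    {s : ℕ} (hA : SemiGood A Pplus s) {w z : Fin n → ℝ} (hw : #{i | w i ≠ 0} ≤ s)
    (hwP : ∀ i ∈ Pplus, 0 ≤ w i) (hAz : A *ᵥ z = A *ᵥ w) (hzP : ∀ i ∈ Pplus, 0 ≤ z i)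
    (hzw : z ≠ w) :
    ∑ i, |w i| < ∑ i, |z i| :=
  lt_of_not_ge fun hle => hzw (hA w hw hwP z hAz hzP hle)

section RestrictPos

variable {ι : Type*} [DecidableEq ι] (P J : Finset ι) (x : ι → ℝ)

def restrictPos : ι → ℝ :=
  fun i => if i ∈ J then (if i ∈ P then max (x i) 0 else x i) else 0

variable {P J x}

theorem card_restrictPos_ne_zero_le [Fintype ι] : #{i | restrictPos P J x i ≠ 0} ≤ #J :=
  card_le_card fun i hi => by
    by_contra hiJ
    simp [restrictPos, hiJ] at hi

theorem restrictPos_nonneg {i : ι} (hi : i ∈ P) : 0 ≤ restrictPos P J x i := by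
  unfold restrictPos
  split_ifs <;> simp

theorem restrictPos_sub_nonneg (hsign : ∀ i ∈ P \ J, x i ≤ 0) {i : ι} (hi : i ∈ P) :
    0 ≤ (restrictPos P J x - x) i := by
  by_cases hiJ : i ∈ J
  · simp [restrictPos, hiJ, hi]
  · simpa [restrictPos, hiJ] using hsign i (mem_sdiff.2 ⟨hi, hiJ⟩)

theorem abs_restrictPos_sub_abs (i : ι) :
    |restrictPos P J x i| - |(restrictPos P J x - x) i| =
      if i ∈ J then (if i ∈ P then x i else |x i|) else -|x i| := by
  simp only [restrictPos, Pi.sub_apply]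
  split_ifs
  · rcases le_total (x i) 0 with h | h
    · simp [max_eq_right h, abs_of_nonpos h]
    · simp [max_eq_left h, abs_of_nonneg h]
  · simp
  · simp

theorem sum_abs_restrictPos_sub_sum_abs [Fintype ι] :
    ∑ i, |restrictPos P J x i| - ∑ i, |(restrictPos P J x - x) i| =
      ∑ i ∈ J ∩ P, x i + ∑ i ∈ J ∩ Pᶜ, |x i| - ∑ i ∈ Jᶜ, |x i| := by
  rw [← sum_sub_distrib, ← sum_add_sum_compl J]
  simp_rw [abs_restrictPos_sub_abs]
  rw [sum_ite_of_true fun _ h => h, sum_ite_of_false (s := Jᶜ) fun _ h => mem_compl.1 h, sum_ite,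
    filter_mem_eq_inter, filter_notMem_eq_sdiff, sdiff_eq_inter_compl, sum_neg_distrib,
    ← sub_eq_add_neg]

end RestrictPos

theorem stmt0_general {m n : ℕ} (A : Matrix (Fin m) (Fin n) ℝ) (Pplus : Finset (Fin n))
    (s : ℕ) (hA : SemiGood A Pplus s)
    (J : Finset (Fin n)) (hJ : J.card ≤ s)
    (x : Fin n → ℝ) (hker : A.mulVec x = 0) (hx : x ≠ 0)
    (hsign : ∀ i ∈ Pplus \ J, x i ≤ 0) :
    ∑ i ∈ J ∩ Pplus, x i + ∑ i ∈ J ∩ Pplusᶜ, |x i| < ∑ i ∈ Jᶜ, |x i| := by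
  have hAz : A *ᵥ (restrictPos Pplus J x - x) = A *ᵥ restrictPos Pplus J x := by
    rw [mulVec_sub, hker, sub_zero]
  have hzw : restrictPos Pplus J x - x ≠ restrictPos Pplus J x := by
    simpa [sub_eq_self] using hx
  have hlt := hA.sum_abs_lt (card_restrictPos_ne_zero_le.trans hJ)
    (fun _ => restrictPos_nonneg) hAz (fun _ => restrictPos_sub_nonneg hsign) hzw
  linarith [sum_abs_restrictPos_sub_sum_abs (P := Pplus) (J := J) (x := x)]

theorem stmt0 {m n : ℕ} (A : Matrix (Fin m) (Fin n) ℝ) (Pplus : Finset (Fin n))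
    (s : ℕ) (hs : 1 ≤ s) (hA : SemiGood A Pplus s)
    (J : Finset (Fin n)) (hJ : J.card ≤ s)
    (x : Fin n → ℝ) (hker : A.mulVec x = 0) (hx : x ≠ 0)
    (hsign : ∀ i ∈ Pplus \ J, x i ≤ 0) :
    ∑ i ∈ J ∩ Pplus, x i + ∑ i ∈ J ∩ Pplusᶜ, |x i| < ∑ i ∈ Jᶜ, |x i| :=
  stmt0_general A Pplus s hA J hJ x hker hx hsign
end

section
/- Let A be an m×n real matrix and s ≥ 1 an integer. Suppose that for every subset J of {1,…,n} with Card(J) ≤ s and every nonzero x in the kernel of A with x_i ≤ 0 for all i ∈ P_+ ∖ J one has Σ_{i∈J∩P_+} x_i + Σ_{i∈J∩P_n} |x_i| < Σ_{i∉J} |x_i|. Then there exists ξ ∈ (0,1) such that for every subset J of {1,…,n} with Card(J) ≤ s and every x in the kernel of A with x_i ≤ 0 for all i ∈ P_+ ∖ J, one has Σ_{i∈J∩P_+} x_i + Σ_{i∈J∩P_n} |x_i| ≤ ξ · Σ_{i∉J} |x_i|. -/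
open Finset

/-!
Fix `J`. Both sides of the inequality are continuous and positively homogeneous in `x`, and the
admissible `x` form a closed cone `C`. On the compact set `C ∩ {‖x‖ = 1}` the strict inequality
therefore holds with a uniform gap, which by homogeneity becomes `lhs ≤ rhs - c‖x‖` on all of `C`;
as `rhs ≤ n‖x‖`, this gives `lhs ≤ ξ · rhs` for all `ξ < 1` close enough to `1`.
Finitely many `J` then admit a common `ξ`.
-/

open Filter Topology

section HomogeneousCone

variable {E : Type*} [NormedAddCommGroup E] [NormedSpace ℝ E] [FiniteDimensional ℝ E]
  {C : Set E}

theorem exists_pos_forall_le_neg_mul_norm (hC : IsClosed C)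
    (hCsmul : ∀ t : ℝ, 0 < t → ∀ x ∈ C, t • x ∈ C) {f : E → ℝ} (hf : Continuous f)
    (hfsmul : ∀ t : ℝ, 0 < t → ∀ x, f (t • x) = t * f x) (hneg : ∀ x ∈ C, x ≠ 0 → f x < 0) :
    ∃ c > 0, ∀ x ∈ C, f x ≤ -c * ‖x‖ := by
  have hf0 : f 0 = 0 := by
    have := hfsmul 2 two_pos 0
    rw [smul_zero] at this
    linarith
  have hnormalize : ∀ x ∈ C, x ≠ 0 →
      ‖x‖⁻¹ • x ∈ C ∩ Metric.sphere 0 1 ∧ f x = ‖x‖ * f (‖x‖⁻¹ • x) := by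
    intro x hx hx0
    have hpos : 0 < ‖x‖ := norm_pos_iff.2 hx0
    refine ⟨⟨hCsmul _ (inv_pos.2 hpos) x hx, ?_⟩, ?_⟩
    · rw [mem_sphere_zero_iff_norm, norm_smul, norm_inv, norm_norm, inv_mul_cancel₀ hpos.ne']
    · rw [hfsmul _ (inv_pos.2 hpos), mul_inv_cancel_left₀ hpos.ne']
  have hK : IsCompact (C ∩ Metric.sphere 0 1) := (isCompact_sphere 0 1).inter_left hC
  rcases (C ∩ Metric.sphere (0 : E) 1).eq_empty_or_nonempty with hempty | hne
  · refine ⟨1, one_pos, fun x hx => ?_⟩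
    obtain rfl : x = 0 := by
      by_contra hx0
      simpa [hempty] using (hnormalize x hx hx0).1
    simp [hf0]
  · obtain ⟨x₀, hx₀, hmax⟩ := hK.exists_isMaxOn hne hf.continuousOn
    refine ⟨-f x₀, neg_pos.2 (hneg x₀ hx₀.1 (ne_zero_of_mem_unit_sphere ⟨x₀, hx₀.2⟩)),
      fun x hx => ?_⟩
    rcases eq_or_ne x 0 with rfl | hx0
    · simp [hf0]
    · obtain ⟨hy, hfx⟩ := hnormalize x hx hx0
      rw [hfx, neg_neg, mul_comm (f x₀)]
      exact mul_le_mul_of_nonneg_left (hmax hy) (norm_nonneg x)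

theorem eventually_forall_le_mul_of_lt (hC : IsClosed C)
    (hCsmul : ∀ t : ℝ, 0 < t → ∀ x ∈ C, t • x ∈ C) {L R : E → ℝ}
    (hL : Continuous L) (hR : Continuous R)
    (hLsmul : ∀ t : ℝ, 0 < t → ∀ x, L (t • x) = t * L x)
    (hRsmul : ∀ t : ℝ, 0 < t → ∀ x, R (t • x) = t * R x)
    (hlt : ∀ x ∈ C, x ≠ 0 → L x < R x) (hR0 : ∀ x ∈ C, 0 ≤ R x) {M : ℝ}
    (hRle : ∀ x ∈ C, R x ≤ M * ‖x‖) :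
    ∀ᶠ ξ in 𝓝[<] (1 : ℝ), ∀ x ∈ C, L x ≤ ξ * R x := by
  obtain ⟨c, hc, hgap⟩ := exists_pos_forall_le_neg_mul_norm hC hCsmul (hL.sub hR)
    (fun t ht x => by simp only [Pi.sub_apply, hLsmul t ht, hRsmul t ht]; ring)
    (fun x hx hx0 => sub_neg.2 (hlt x hx hx0))
  set M' := max M 1
  have hM' : 0 < M' := lt_max_of_lt_right one_pos
  have hξ₀ : 1 - c / M' < 1 := sub_lt_self 1 (div_pos hc hM')
  filter_upwards [mem_nhdsWithin_of_mem_nhds (Ici_mem_nhds hξ₀)] with ξ (hξ : 1 - c / M' ≤ ξ) x hx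
  have hcR : c / M' * R x ≤ c * ‖x‖ :=
    calc c / M' * R x ≤ c / M' * (M' * ‖x‖) :=
          mul_le_mul_of_nonneg_left ((hRle x hx).trans (by gcongr; exact le_max_left M 1))
            (div_pos hc hM').le
      _ = c * ‖x‖ := by field_simp
  calc L x ≤ R x - c * ‖x‖ := by linarith [hgap x hx, show (L - R) x = L x - R x from rfl]
    _ ≤ (1 - c / M') * R x := by linarith
    _ ≤ ξ * R x := mul_le_mul_of_nonneg_right hξ (hR0 x hx)

end HomogeneousCone

def signedKernel {m n : ℕ} (A : Matrix (Fin m) (Fin n) ℝ) (Pplus J : Finset (Fin n)) :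
    Set (Fin n → ℝ) :=
  {x | A.mulVec x = 0 ∧ ∀ i ∈ Pplus \ J, x i ≤ 0}

theorem isClosed_signedKernel {m n : ℕ} (A : Matrix (Fin m) (Fin n) ℝ)
    (Pplus J : Finset (Fin n)) : IsClosed (signedKernel A Pplus J) := by
  have hsign : IsClosed {x : Fin n → ℝ | ∀ i ∈ Pplus \ J, x i ≤ 0} := by
    simp only [Set.ofPred_forall]
    exact isClosed_iInter fun i => isClosed_iInter fun _ =>
      isClosed_le (continuous_apply i) continuous_const
  exact (isClosed_eq (continuous_const.matrix_mulVec continuous_id) continuous_const).inter hsign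

theorem smul_mem_signedKernel {m n : ℕ} {A : Matrix (Fin m) (Fin n) ℝ}
    {Pplus J : Finset (Fin n)} {t : ℝ} (ht : 0 < t) {x : Fin n → ℝ}
    (hx : x ∈ signedKernel A Pplus J) : t • x ∈ signedKernel A Pplus J :=
  ⟨by rw [Matrix.mulVec_smul, hx.1, smul_zero],
    fun i hi => mul_nonpos_of_nonneg_of_nonpos ht.le (hx.2 i hi)⟩

theorem eventually_le_mul_sum_compl {m n : ℕ} (A : Matrix (Fin m) (Fin n) ℝ)
    (Pplus J : Finset (Fin n))
    (h : ∀ x : Fin n → ℝ, A.mulVec x = 0 → x ≠ 0 → (∀ i ∈ Pplus \ J, x i ≤ 0) →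
      ∑ i ∈ J ∩ Pplus, x i + ∑ i ∈ J ∩ Pplusᶜ, |x i| < ∑ i ∈ Jᶜ, |x i|) :
    ∀ᶠ ξ in 𝓝[<] (1 : ℝ), ∀ x ∈ signedKernel A Pplus J,
      ∑ i ∈ J ∩ Pplus, x i + ∑ i ∈ J ∩ Pplusᶜ, |x i| ≤ ξ * ∑ i ∈ Jᶜ, |x i| := by
  refine eventually_forall_le_mul_of_lt (isClosed_signedKernel A Pplus J)
    (fun t ht x hx => smul_mem_signedKernel ht hx) (by fun_prop) (by fun_prop)
    (fun t ht x => ?_) (fun t ht x => ?_) (fun x hx hx0 => h x hx.1 hx0 hx.2)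
    (fun x _ => sum_nonneg fun i _ => abs_nonneg (x i)) (M := n) (fun x _ => ?_)
  · simp [mul_add, mul_sum, abs_mul, abs_of_pos ht]
  · simp [mul_sum, abs_mul, abs_of_pos ht]
  · calc ∑ i ∈ Jᶜ, |x i| ≤ ∑ i, |x i| :=
          sum_le_sum_of_subset_of_nonneg (subset_univ _) fun i _ _ => abs_nonneg (x i)
      _ ≤ ∑ _i : Fin n, ‖x‖ := sum_le_sum fun i _ => norm_le_pi_norm x i
      _ = n * ‖x‖ := by simp

theorem stmt1_general {m n : ℕ} (A : Matrix (Fin m) (Fin n) ℝ) (Pplus : Finset (Fin n))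
    (s : ℕ)
    (h : ∀ J : Finset (Fin n), J.card ≤ s →
      ∀ x : Fin n → ℝ, A.mulVec x = 0 → x ≠ 0 → (∀ i ∈ Pplus \ J, x i ≤ 0) →
        ∑ i ∈ J ∩ Pplus, x i + ∑ i ∈ J ∩ Pplusᶜ, |x i| < ∑ i ∈ Jᶜ, |x i|) :
    ∃ ξ : ℝ, 0 < ξ ∧ ξ < 1 ∧
      ∀ J : Finset (Fin n), J.card ≤ s →
        ∀ x : Fin n → ℝ, A.mulVec x = 0 → (∀ i ∈ Pplus \ J, x i ≤ 0) →
          ∑ i ∈ J ∩ Pplus, x i + ∑ i ∈ J ∩ Pplusᶜ, |x i| ≤ ξ * ∑ i ∈ Jᶜ, |x i| := by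
  have hJ : ∀ J : Finset (Fin n), ∀ᶠ ξ in 𝓝[<] (1 : ℝ), J.card ≤ s →
      ∀ x ∈ signedKernel A Pplus J,
        ∑ i ∈ J ∩ Pplus, x i + ∑ i ∈ J ∩ Pplusᶜ, |x i| ≤ ξ * ∑ i ∈ Jᶜ, |x i| := by
    intro J
    by_cases hcard : J.card ≤ s
    · filter_upwards [eventually_le_mul_sum_compl A Pplus J (h J hcard)] with ξ hξ _ using hξ
    · exact Eventually.of_forall fun _ hcard' => absurd hcard' hcard
  obtain ⟨ξ, hξ, hξ0, hξ1⟩ := ((eventually_all.2 hJ).and (Ioo_mem_nhdsLT zero_lt_one)).exists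
  exact ⟨ξ, hξ0, hξ1, fun J hcard x hAx hsign => hξ J hcard x ⟨hAx, hsign⟩⟩

theorem stmt1 {m n : ℕ} (A : Matrix (Fin m) (Fin n) ℝ) (Pplus : Finset (Fin n))
    (s : ℕ) (hs : 1 ≤ s)
    (h : ∀ J : Finset (Fin n), J.card ≤ s →
      ∀ x : Fin n → ℝ, A.mulVec x = 0 → x ≠ 0 → (∀ i ∈ Pplus \ J, x i ≤ 0) →
        ∑ i ∈ J ∩ Pplus, x i + ∑ i ∈ J ∩ Pplusᶜ, |x i| < ∑ i ∈ Jᶜ, |x i|) :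
    ∃ ξ : ℝ, 0 < ξ ∧ ξ < 1 ∧
      ∀ J : Finset (Fin n), J.card ≤ s →
        ∀ x : Fin n → ℝ, A.mulVec x = 0 → (∀ i ∈ Pplus \ J, x i ≤ 0) →
          ∑ i ∈ J ∩ Pplus, x i + ∑ i ∈ J ∩ Pplusᶜ, |x i| ≤ ξ * ∑ i ∈ Jᶜ, |x i| :=
  stmt1_general A Pplus s h
end

section
/- Let A be an m×n real matrix, s ≥ 1 an integer, and ξ ∈ (0,1). Suppose that for every subset J of {1,…,n} with Card(J) ≤ s and every x in the kernel of A with x_i ≤ 0 for all i ∈ P_+ ∖ J one has Σ_{i∈J∩P_+} x_i + Σ_{i∈J∩P_n} |x_i| ≤ ξ · Σ_{i∉J} |x_i|. Then A is s-semigood. -/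
/-! Let `x = w - z ∈ ker A`. Apply the hypothesis not to the support of `w` but to the smaller set
`J` obtained by discarding the indices of `P₊` where `x ≤ 0`: then `x` is nonpositive on `P₊ \ J`
and positive on `J ∩ P₊`, so the hypothesis reads `∑_J |x| ≤ ξ ∑_{Jᶜ} |x|`. On the other hand
`‖z‖₁ ≤ ‖w‖₁` gives `∑_{Jᶜ} |x| ≤ ∑_J |x|`, and since `ξ < 1` both sums vanish. -/

open Finset

section

variable {ι : Type*} [Fintype ι] [DecidableEq ι]

theorem eq_zero_of_sum_abs_le_mul_sum_abs_compl {x : ι → ℝ} {J : Finset ι} {ξ : ℝ} (hξ : ξ < 1)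
    (hJ : ∑ i ∈ J, |x i| ≤ ξ * ∑ i ∈ Jᶜ, |x i|) (hJc : ∑ i ∈ Jᶜ, |x i| ≤ ∑ i ∈ J, |x i|) :
    x = 0 := by
  have hnonneg : 0 ≤ ∑ i ∈ Jᶜ, |x i| := sum_nonneg fun i _ => abs_nonneg (x i)
  have hcompl : ∑ i ∈ Jᶜ, |x i| = 0 := by nlinarith
  have htotal : ∑ i, |x i| = 0 := by
    rw [hcompl, mul_zero] at hJ
    rw [← sum_add_sum_compl J]
    linarith [sum_nonneg fun i (_ : i ∈ J) => abs_nonneg (x i)]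
  funext i
  exact abs_eq_zero.mp ((sum_eq_zero_iff_of_nonneg fun j _ => abs_nonneg (x j)).mp htotal i
    (mem_univ i))

noncomputable def signedSupport (P : Finset ι) (w z : ι → ℝ) : Finset ι :=
  {i | w i ≠ 0 ∧ (i ∉ P ∨ z i < w i)}

variable {P : Finset ι} {w z : ι → ℝ}

theorem card_signedSupport_le :
    (signedSupport P w z).card ≤ (univ.filter fun i => w i ≠ 0).card :=
  card_le_card fun _ hi => by
    simp only [signedSupport, mem_filter] at hi ⊢
    exact ⟨hi.1, hi.2.1⟩

theorem sub_nonpos_of_mem_sdiff_signedSupport (hz : ∀ i ∈ P, 0 ≤ z i) {i : ι}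
    (hi : i ∈ P \ signedSupport P w z) : (w - z) i ≤ 0 := by
  simp only [signedSupport, mem_sdiff, mem_filter, mem_univ, true_and, not_and, not_or,
    not_lt] at hi
  by_cases hwi : w i = 0
  · simp [hwi, hz i hi.1]
  · simpa using (hi.2 hwi).2

theorem sum_inter_add_sum_inter_compl_signedSupport :
    ∑ i ∈ signedSupport P w z ∩ P, (w - z) i + ∑ i ∈ signedSupport P w z ∩ Pᶜ, |(w - z) i| =
      ∑ i ∈ signedSupport P w z, |(w - z) i| := by
  have hpos : ∀ i ∈ signedSupport P w z ∩ P, (w - z) i = |(w - z) i| := by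
    intro i hi
    simp only [signedSupport, mem_inter, mem_filter, mem_univ, true_and] at hi
    have : z i < w i := hi.1.2.resolve_left (not_not.mpr hi.2)
    rw [abs_of_pos (by simpa using this)]
  rw [sum_congr rfl hpos, ← sdiff_eq_inter_compl, sum_inter_add_sum_sdiff]

theorem abs_add_abs_sub_le_of_notMem_signedSupport (hw : ∀ i ∈ P, 0 ≤ w i) {i : ι}
    (hi : i ∉ signedSupport P w z) : |w i| + |(w - z) i| ≤ |z i| := by
  simp only [signedSupport, mem_filter, mem_univ, true_and, not_and, not_or, not_not,
    not_lt] at hi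
  by_cases hwi : w i = 0
  · simp [hwi]
  · obtain ⟨hiP, hwz⟩ := hi hwi
    have := hw i hiP
    rw [Pi.sub_apply, abs_of_nonneg this, abs_of_nonpos (by linarith),
      abs_of_nonneg (by linarith)]
    linarith

theorem sum_abs_compl_le_sum_abs_signedSupport (hw : ∀ i ∈ P, 0 ≤ w i)
    (hzw : ∑ i, |z i| ≤ ∑ i, |w i|) :
    ∑ i ∈ (signedSupport P w z)ᶜ, |(w - z) i| ≤ ∑ i ∈ signedSupport P w z, |(w - z) i| := by
  set J := signedSupport P w z
  have hin : ∑ i ∈ J, (|w i| - |z i|) ≤ ∑ i ∈ J, |(w - z) i| :=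
    sum_le_sum fun i _ => abs_sub_abs_le_abs_sub (w i) (z i)
  have hout : ∑ i ∈ Jᶜ, (|w i| - |z i|) ≤ -∑ i ∈ Jᶜ, |(w - z) i| := by
    rw [← sum_neg_distrib]
    refine sum_le_sum fun i hi => ?_
    have := abs_add_abs_sub_le_of_notMem_signedSupport hw (mem_compl.mp hi)
    linarith
  have htotal : 0 ≤ ∑ i ∈ J, (|w i| - |z i|) + ∑ i ∈ Jᶜ, (|w i| - |z i|) := by
    rw [sum_add_sum_compl, sum_sub_distrib]
    linarith
  linarith

end

theorem stmt2_general {m n : ℕ} (A : Matrix (Fin m) (Fin n) ℝ) (Pplus : Finset (Fin n))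
    (s : ℕ) (ξ : ℝ) (hξ1 : ξ < 1)
    (h : ∀ J : Finset (Fin n), J.card ≤ s →
      ∀ x : Fin n → ℝ, A.mulVec x = 0 → (∀ i ∈ Pplus \ J, x i ≤ 0) →
        ∑ i ∈ J ∩ Pplus, x i + ∑ i ∈ J ∩ Pplusᶜ, |x i| ≤ ξ * ∑ i ∈ Jᶜ, |x i|) :
    SemiGood A Pplus s := by
  intro w hw hwP z hAz hzP hzw
  have hker : A.mulVec (w - z) = 0 := by rw [Matrix.mulVec_sub, hAz, sub_self]
  have hJ := h (signedSupport Pplus w z) (card_signedSupport_le.trans hw) (w - z) hker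
    fun i hi => sub_nonpos_of_mem_sdiff_signedSupport hzP hi
  rw [sum_inter_add_sum_inter_compl_signedSupport] at hJ
  exact (sub_eq_zero.mp (eq_zero_of_sum_abs_le_mul_sum_abs_compl hξ1 hJ
    (sum_abs_compl_le_sum_abs_signedSupport hwP hzw))).symm

theorem stmt2 {m n : ℕ} (A : Matrix (Fin m) (Fin n) ℝ) (Pplus : Finset (Fin n))
    (s : ℕ) (hs : 1 ≤ s) (ξ : ℝ) (hξ0 : 0 < ξ) (hξ1 : ξ < 1)
    (h : ∀ J : Finset (Fin n), J.card ≤ s →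
      ∀ x : Fin n → ℝ, A.mulVec x = 0 → (∀ i ∈ Pplus \ J, x i ≤ 0) →
        ∑ i ∈ J ∩ Pplus, x i + ∑ i ∈ J ∩ Pplusᶜ, |x i| ≤ ξ * ∑ i ∈ Jᶜ, |x i|) :
    SemiGood A Pplus s :=
  stmt2_general A Pplus s ξ hξ1 h
end

section
/- Let A be an m×n real matrix, s ≥ 1 an integer, and ξ ∈ (0,1). Suppose that for every subset J of {1,…,n} with Card(J) ≤ s and every x in the kernel of A with x_i ≤ 0 for all i ∈ P_+ ∖ J one has Σ_{i∈J∩P_+} x_i + Σ_{i∈J∩P_n} |x_i| ≤ ξ · Σ_{i∉J} |x_i|. Then for every ξ' ∈ (ξ,1) there exists θ ∈ [1,∞) such that A satisfies SG_s(ξ',θ), i.e., for every x ∈ Ker A and every subset J of {1,…,n} with Card(J) ≤ s, Σ_{i∈J∩P_+} x_i + Σ_{i∈J∩P_n} |x_i| ≤ ξ' · (Σ_{i∈P_n∖J} |x_i| + Σ_{i∈P_+∖J} max(−x_i, θ·x_i)). -/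
open Finset

/-!
Fix `J`. On the part of `Ker A` supported in `J` the hypothesis gives a left-hand side `≤ 0`,
so it suffices to work on a complement `W` of that part inside `Ker A`. On the unit sphere of `W`,
wherever the positive parts `xᵢ⁺` (`i ∈ P₊ \ J`) all vanish, the hypothesis applies and, as
`ξ < ξ'` and `x` does not vanish off `J`, gives the left-hand side `< ξ' ∑_{i ∉ J} |xᵢ|`.
By compactness and homogeneity the left-hand side is therefore at most
`ξ' ∑_{i ∉ J} |xᵢ| + C ∑_{i ∈ P₊ \ J} xᵢ⁺` on all of `Ker A`. Finally
`ψ_θ(t) = |t| + (θ - 1) t⁺`, so `θ = 1 + C / ξ'` works, with `C` taken uniform over the finitely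
many `J`.
-/

theorem Submodule.exists_le_mul_of_homogeneous {E : Type*} [NormedAddCommGroup E]
    [NormedSpace ℝ E] [FiniteDimensional ℝ E] (W : Submodule ℝ E) {f g : E → ℝ}
    (hf : Continuous f) (hg : Continuous g)
    (hf_smul : ∀ t : ℝ, 0 ≤ t → ∀ x, f (t • x) = t * f x)
    (hg_smul : ∀ t : ℝ, 0 ≤ t → ∀ x, g (t • x) = t * g x)
    (hg_nonneg : ∀ x, 0 ≤ g x) (hfg : ∀ x ∈ W, x ≠ 0 → g x = 0 → f x < 0) :
    ∃ C : ℝ, ∀ x ∈ W, f x ≤ C * g x := by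
  have hS : IsCompact (Metric.sphere (0 : E) 1 ∩ W) :=
    (isCompact_sphere 0 1).inter_right W.closed_of_finiteDimensional
  have hcover : Metric.sphere (0 : E) 1 ∩ W ⊆ ⋃ k : ℕ, {x | f x < k * g x} := by
    rintro x ⟨hx1, hxW⟩
    have hx0 : x ≠ 0 := ne_zero_of_mem_unit_sphere ⟨x, hx1⟩
    rcases (hg_nonneg x).eq_or_lt with hgx | hgx
    · exact Set.mem_iUnion.2 ⟨0, by simpa using hfg x hxW hx0 hgx.symm⟩
    · obtain ⟨k, hk⟩ := exists_nat_gt (f x / g x)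
      exact Set.mem_iUnion.2 ⟨k, (div_lt_iff₀ hgx).1 hk⟩
  have hmono : Monotone fun k : ℕ => {x | f x < k * g x} := fun k l hkl x hx =>
    hx.trans_le (mul_le_mul_of_nonneg_right (by exact_mod_cast hkl) (hg_nonneg x))
  obtain ⟨k, hk⟩ := hS.elim_directed_cover _ (fun k => isOpen_lt hf (continuous_const.mul hg))
    hcover hmono.directed_le
  refine ⟨k, fun x hxW => ?_⟩
  rcases eq_or_ne x 0 with rfl | hx0
  · rw [← zero_smul ℝ (0 : E), hf_smul 0 le_rfl, hg_smul 0 le_rfl]; simp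
  have hnorm : 0 < ‖x‖ := norm_pos_iff.2 hx0
  have hy : ‖x‖⁻¹ • x ∈ Metric.sphere (0 : E) 1 ∩ W :=
    ⟨by simp [norm_smul, hnorm.ne'], W.smul_mem _ hxW⟩
  have hx : x = ‖x‖ • ‖x‖⁻¹ • x := by rw [smul_inv_smul₀ hnorm.ne']
  rw [hx, hf_smul _ hnorm.le, hg_smul _ hnorm.le, mul_left_comm]
  exact mul_le_mul_of_nonneg_left (hk hy).le hnorm.le

lemma max_neg_mul_eq_abs_add {θ : ℝ} (hθ : 1 ≤ θ) (a : ℝ) :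
    max (-a) (θ * a) = |a| + (θ - 1) * max a 0 := by
  rcases le_total a 0 with ha | ha
  · rw [max_eq_left (by nlinarith), abs_of_nonpos ha, max_eq_right ha]
    ring
  · rw [max_eq_right (by nlinarith), abs_of_nonneg ha, max_eq_left ha]
    ring

section SignConditions

open Matrix Filter

variable {ι : Type*} [Fintype ι] [DecidableEq ι] (Pplus J : Finset ι)

lemma sum_abs_add_sum_max_neg_mul {θ : ℝ} (hθ : 1 ≤ θ) (x : ι → ℝ) :
    ∑ i ∈ Pplusᶜ \ J, |x i| + ∑ i ∈ Pplus \ J, max (-x i) (θ * x i) =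
      ∑ i ∈ Jᶜ, |x i| + (θ - 1) * ∑ i ∈ Pplus \ J, max (x i) 0 := by
  have hP : Jᶜ ∩ Pplus = Pplus \ J := by ext i; simp [and_comm]
  have hN : Jᶜ \ Pplus = Pplusᶜ \ J := by ext i; simp [and_comm]
  rw [← Finset.sum_inter_add_sum_sdiff Jᶜ Pplus, hP, hN]
  simp only [max_neg_mul_eq_abs_add hθ, Finset.sum_add_distrib, Finset.mul_sum]
  ring

def signedMassOn (x : ι → ℝ) : ℝ :=
  ∑ i ∈ J ∩ Pplus, x i + ∑ i ∈ J ∩ Pplusᶜ, |x i|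

@[fun_prop]
lemma continuous_signedMassOn : Continuous (signedMassOn Pplus J) := by
  unfold signedMassOn
  fun_prop

lemma signedMassOn_smul {t : ℝ} (ht : 0 ≤ t) (x : ι → ℝ) :
    signedMassOn Pplus J (t • x) = t * signedMassOn Pplus J x := by
  simp only [signedMassOn, Pi.smul_apply, smul_eq_mul, abs_mul, abs_of_nonneg ht,
    ← Finset.mul_sum, mul_add]

lemma signedMassOn_add_le (x y : ι → ℝ) :
    signedMassOn Pplus J (x + y) ≤ signedMassOn Pplus J x + signedMassOn Pplus J y := by
  have habs := Finset.sum_le_sum fun i (_ : i ∈ J ∩ Pplusᶜ) => abs_add_le (x i) (y i)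
  simp only [signedMassOn, Pi.add_apply, Finset.sum_add_distrib] at habs ⊢
  linarith

def vanishingOff : Submodule ℝ (ι → ℝ) :=
  Submodule.pi (↑Jᶜ : Set ι) fun _ => ⊥

variable {Pplus J}

lemma mem_vanishingOff {x : ι → ℝ} : x ∈ vanishingOff J ↔ ∀ i ∉ J, x i = 0 := by
  simp [vanishingOff, Submodule.mem_pi]

lemma sum_abs_compl_eq_zero_iff {x : ι → ℝ} : ∑ i ∈ Jᶜ, |x i| = 0 ↔ x ∈ vanishingOff J := by
  simp [Finset.sum_eq_zero_iff_of_nonneg, mem_vanishingOff]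

variable {m : ℕ} {A : Matrix (Fin m) ι ℝ} {ξ ξ' : ℝ}

lemma exists_signedMassOn_le_on_disjoint (hξ : ξ < ξ')
    (h : ∀ x, A *ᵥ x = 0 → (∀ i ∈ Pplus \ J, x i ≤ 0) →
      signedMassOn Pplus J x ≤ ξ * ∑ i ∈ Jᶜ, |x i|)
    {W : Submodule ℝ (ι → ℝ)} (hWA : ∀ x ∈ W, A *ᵥ x = 0) (hW : Disjoint W (vanishingOff J)) :
    ∃ C : ℝ, ∀ x ∈ W,
      signedMassOn Pplus J x ≤ ξ' * ∑ i ∈ Jᶜ, |x i| + C * ∑ i ∈ Pplus \ J, max (x i) 0 := by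
  have hpos : ∀ x ∈ W, x ≠ 0 → ∑ i ∈ Pplus \ J, max (x i) 0 = 0 →
      signedMassOn Pplus J x - ξ' * ∑ i ∈ Jᶜ, |x i| < 0 := by
    intro x hxW hx0 hx
    have hsign : ∀ i ∈ Pplus \ J, x i ≤ 0 := fun i hi =>
      max_eq_right_iff.1 ((sum_eq_zero_iff_of_nonneg fun _ _ => le_max_right _ _).1 hx i hi)
    have hoff : 0 < ∑ i ∈ Jᶜ, |x i| := by
      refine (Finset.sum_nonneg fun _ _ => abs_nonneg _).lt_of_ne fun h0 => hx0 ?_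
      exact Submodule.disjoint_def.1 hW x hxW (sum_abs_compl_eq_zero_iff.1 h0.symm)
    nlinarith [h x (hWA x hxW) hsign]
  obtain ⟨C, hC⟩ := W.exists_le_mul_of_homogeneous
    (by fun_prop : Continuous fun x : ι → ℝ => signedMassOn Pplus J x - ξ' * ∑ i ∈ Jᶜ, |x i|)
    (by fun_prop : Continuous fun x : ι → ℝ => ∑ i ∈ Pplus \ J, max (x i) 0)
    (fun t ht x => by
      simp only [signedMassOn_smul Pplus J ht, Pi.smul_apply, smul_eq_mul, abs_mul,
        abs_of_nonneg ht, ← Finset.mul_sum]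
      ring)
    (fun t ht x => by
      simp only [Pi.smul_apply, smul_eq_mul, Finset.mul_sum, mul_max_of_nonneg _ _ ht, mul_zero])
    (fun x => Finset.sum_nonneg fun _ _ => le_max_right _ _) hpos
  exact ⟨C, fun x hx => by linarith [hC x hx]⟩

lemma exists_signedMassOn_le_of_sign_condition (hξ : ξ < ξ')
    (h : ∀ x, A *ᵥ x = 0 → (∀ i ∈ Pplus \ J, x i ≤ 0) →
      signedMassOn Pplus J x ≤ ξ * ∑ i ∈ Jᶜ, |x i|) :
    ∃ C : ℝ, ∀ x, A *ᵥ x = 0 →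
      signedMassOn Pplus J x ≤ ξ' * ∑ i ∈ Jᶜ, |x i| + C * ∑ i ∈ Pplus \ J, max (x i) 0 := by
  set K := LinearMap.ker A.mulVecLin
  obtain ⟨W, hW⟩ := (K ⊓ vanishingOff J).exists_isCompl
  obtain ⟨C, hC⟩ := exists_signedMassOn_le_on_disjoint hξ h (W := K ⊓ W) (fun x hx => hx.1)
    (Submodule.disjoint_def.2 fun x hx hxJ =>
      Submodule.disjoint_def.1 hW.disjoint x ⟨hx.1, hxJ⟩ hx.2)
  refine ⟨C, fun x hx => ?_⟩
  obtain ⟨p, ⟨hpK, hpJ⟩, w, hwW, rfl⟩ :=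
    Submodule.mem_sup.1 (hW.sup_eq_top ▸ Submodule.mem_top (x := x))
  have hwK : w ∈ K := by simpa using K.sub_mem (show p + w ∈ K from hx) hpK
  have hp : signedMassOn Pplus J p ≤ 0 := by
    have hoff : ∑ i ∈ Jᶜ, |p i| = 0 := sum_abs_compl_eq_zero_iff.2 hpJ
    have hsign : ∀ i ∈ Pplus \ J, p i ≤ 0 := fun i hi =>
      (mem_vanishingOff.1 hpJ i (Finset.mem_sdiff.1 hi).2).le
    simpa [hoff] using h p hpK hsign
  have hoff : ∀ i ∉ J, (p + w) i = w i := fun i hi => by simp [mem_vanishingOff.1 hpJ i hi]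
  have habs : ∑ i ∈ Jᶜ, |(p + w) i| = ∑ i ∈ Jᶜ, |w i| :=
    Finset.sum_congr rfl fun i hi => by rw [hoff i (Finset.mem_compl.1 hi)]
  have hmax : ∑ i ∈ Pplus \ J, max ((p + w) i) 0 = ∑ i ∈ Pplus \ J, max (w i) 0 :=
    Finset.sum_congr rfl fun i hi => by rw [hoff i (Finset.mem_sdiff.1 hi).2]
  rw [habs, hmax]
  linarith [signedMassOn_add_le Pplus J p w, hC w ⟨hwK, hwW⟩]

variable (Pplus)

lemma exists_uniform_signedMassOn_le (hξ : ξ < ξ') (s : ℕ)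
    (h : ∀ J : Finset ι, J.card ≤ s → ∀ x, A *ᵥ x = 0 → (∀ i ∈ Pplus \ J, x i ≤ 0) →
      signedMassOn Pplus J x ≤ ξ * ∑ i ∈ Jᶜ, |x i|) :
    ∃ C : ℝ, 0 ≤ C ∧ ∀ J : Finset ι, J.card ≤ s → ∀ x, A *ᵥ x = 0 →
      signedMassOn Pplus J x ≤ ξ' * ∑ i ∈ Jᶜ, |x i| + C * ∑ i ∈ Pplus \ J, max (x i) 0 := by
  have hev : ∀ J : Finset ι, ∀ᶠ C in atTop, J.card ≤ s → ∀ x, A *ᵥ x = 0 →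
      signedMassOn Pplus J x ≤ ξ' * ∑ i ∈ Jᶜ, |x i| + C * ∑ i ∈ Pplus \ J, max (x i) 0 := by
    intro J
    by_cases hJ : J.card ≤ s
    · obtain ⟨C₀, hC₀⟩ := exists_signedMassOn_le_of_sign_condition hξ (h J hJ)
      filter_upwards [eventually_ge_atTop C₀] with C hC _ x hx
      have hmax : 0 ≤ ∑ i ∈ Pplus \ J, max (x i) 0 := sum_nonneg fun _ _ => le_max_right _ _
      exact (hC₀ x hx).trans (by gcongr)
    · exact Eventually.of_forall fun _ hJ' => absurd hJ' hJ
  exact ((eventually_ge_atTop 0).and (eventually_all.2 hev)).exists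

end SignConditions

theorem stmt3_general {m n : ℕ} (A : Matrix (Fin m) (Fin n) ℝ) (Pplus : Finset (Fin n))
    (s : ℕ) (ξ : ℝ) (hξ0 : 0 < ξ)
    (h : ∀ J : Finset (Fin n), J.card ≤ s →
      ∀ x : Fin n → ℝ, A.mulVec x = 0 → (∀ i ∈ Pplus \ J, x i ≤ 0) →
        ∑ i ∈ J ∩ Pplus, x i + ∑ i ∈ J ∩ Pplusᶜ, |x i| ≤ ξ * ∑ i ∈ Jᶜ, |x i|) :
    ∀ ξ' : ℝ, ξ < ξ' → ξ' < 1 →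
      ∃ θ : ℝ, 1 ≤ θ ∧ SGCond A Pplus s ξ' θ := by
  intro ξ' hξξ' _
  have hξ' : 0 < ξ' := hξ0.trans hξξ'
  obtain ⟨C, hC0, hC⟩ := exists_uniform_signedMassOn_le Pplus hξξ' s h
  have hθ : 1 ≤ 1 + C / ξ' := le_add_of_nonneg_right (div_nonneg hC0 hξ'.le)
  refine ⟨1 + C / ξ', hθ, fun x hx J hJ => ?_⟩
  rw [sum_abs_add_sum_max_neg_mul Pplus J hθ]
  calc _ ≤ ξ' * ∑ i ∈ Jᶜ, |x i| + C * ∑ i ∈ Pplus \ J, max (x i) 0 := hC J hJ x hx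
    _ = _ := by field_simp; ring

theorem stmt3 {m n : ℕ} (A : Matrix (Fin m) (Fin n) ℝ) (Pplus : Finset (Fin n))
    (s : ℕ) (hs : 1 ≤ s) (ξ : ℝ) (hξ0 : 0 < ξ) (hξ1 : ξ < 1)
    (h : ∀ J : Finset (Fin n), J.card ≤ s →
      ∀ x : Fin n → ℝ, A.mulVec x = 0 → (∀ i ∈ Pplus \ J, x i ≤ 0) →
        ∑ i ∈ J ∩ Pplus, x i + ∑ i ∈ J ∩ Pplusᶜ, |x i| ≤ ξ * ∑ i ∈ Jᶜ, |x i|) :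
    ∀ ξ' : ℝ, ξ < ξ' → ξ' < 1 →
      ∃ θ : ℝ, 1 ≤ θ ∧ SGCond A Pplus s ξ' θ :=
  stmt3_general A Pplus s ξ hξ0 h
end

section
/- Let A be an m×n real matrix, s ≥ 1 an integer, ξ ∈ (0,1), θ ∈ [1,∞), and let ‖·‖ be any norm on ℝ^m. If A satisfies SG_s(ξ,θ), then there exists β ∈ [0,∞) such that A satisfies SG_{s,β}(ξ,θ): for every x ∈ ℝ^n and every subset J of {1,…,n} with Card(J) ≤ s, Σ_{i∈J∩P_+} x_i + Σ_{i∈J∩P_n} |x_i| ≤ β·‖Ax‖ + ξ·(Σ_{i∈P_n∖J} |x_i| + Σ_{i∈P_+∖J} max(−x_i, θ·x_i)). -/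
open Finset

/-!
In finite dimension the open mapping theorem and the equivalence of norms give a Hoffman-type
bound: every `x` is within `ℓ¹`-distance `C * N (A x)` of some `z ∈ Ker A`. Apply `SG_s(ξ,θ)`
to `z`. Moving from `z` to `x` changes the left-hand side by at most `‖x - z‖₁` and the
right-hand side by at most `θ * ‖x - z‖₁` (as `ψ_θ` is `θ`-Lipschitz for `θ ≥ 1`), so
`β = (1 + ξ θ) C` works.
-/

namespace IsNorm

variable {m : ℕ} {N : (Fin m → ℝ) → ℝ}

def toSeminorm (hN : IsNorm N) : Seminorm ℝ (Fin m → ℝ) :=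
  Seminorm.of N hN.1 fun c x => by rw [hN.2.1, Real.norm_eq_abs]

lemma nonneg (hN : IsNorm N) (x : Fin m → ℝ) : 0 ≤ N x :=
  apply_nonneg hN.toSeminorm x

lemma continuous (hN : IsNorm N) : Continuous N :=
  continuousOn_univ.1 (hN.toSeminorm.convexOn.continuousOn isOpen_univ)

lemma exists_norm_le_mul (hN : IsNorm N) : ∃ c, 0 ≤ c ∧ ∀ y, ‖y‖ ≤ c * N y := by
  obtain ⟨a, ha, haN⟩ : ∃ a > 0, ∀ y ∈ Metric.sphere (0 : Fin m → ℝ) 1, a ≤ N y := by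
    rcases (Metric.sphere (0 : Fin m → ℝ) 1).eq_empty_or_nonempty with hS | hS
    · exact ⟨1, one_pos, by simp [hS]⟩
    obtain ⟨y₀, hy₀, hmin⟩ :=
      (isCompact_sphere (0 : Fin m → ℝ) 1).exists_isMinOn hS hN.continuous.continuousOn
    have hy₀0 : y₀ ≠ 0 := ne_zero_of_mem_unit_sphere ⟨y₀, hy₀⟩
    exact ⟨N y₀, (hN.nonneg y₀).lt_of_ne fun h => hy₀0 (hN.2.2 y₀ h.symm), hmin⟩
  refine ⟨a⁻¹, inv_nonneg.2 ha.le, fun y => ?_⟩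
  rcases eq_or_ne y 0 with rfl | hy
  · simpa using mul_nonneg (inv_nonneg.2 ha.le) (hN.nonneg 0)
  have hya := haN (‖y‖⁻¹ • y) (by simp [norm_smul, hy])
  rw [hN.2.1, abs_inv, abs_norm, le_inv_mul_iff₀ (norm_pos_iff.2 hy)] at hya
  rwa [le_inv_mul_iff₀ ha, mul_comm]

lemma exists_preimage_norm_le (hN : IsNorm N) {E : Type*} [NormedAddCommGroup E]
    [NormedSpace ℝ E] [FiniteDimensional ℝ E] (f : E →ₗ[ℝ] Fin m → ℝ) :
    ∃ C, 0 ≤ C ∧ ∀ x, ∃ u, f u = f x ∧ ‖u‖ ≤ C * N (f x) := by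
  obtain ⟨c, hc0, hc⟩ := hN.exists_norm_le_mul
  obtain ⟨C, hC0, hC⟩ := ContinuousLinearMap.exists_preimage_norm_le
    (LinearMap.toContinuousLinearMap f.rangeRestrict) f.surjective_rangeRestrict
  refine ⟨C * c, by positivity, fun x => ?_⟩
  obtain ⟨u, hu, hun⟩ := hC (f.rangeRestrict x)
  refine ⟨u, congrArg Subtype.val hu, hun.trans ?_⟩
  rw [mul_assoc]
  exact mul_le_mul_of_nonneg_left (hc (f x)) hC0.le

end IsNorm

lemma exists_mulVec_eq_zero_sum_abs_sub_le {m n : ℕ} {N : (Fin m → ℝ) → ℝ} (hN : IsNorm N)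
    (A : Matrix (Fin m) (Fin n) ℝ) :
    ∃ C, 0 ≤ C ∧ ∀ x, ∃ z, A.mulVec z = 0 ∧ ∑ i, |x i - z i| ≤ C * N (A.mulVec x) := by
  obtain ⟨C, hC0, hC⟩ := hN.exists_preimage_norm_le A.mulVecLin
  refine ⟨n * C, by positivity, fun x => ?_⟩
  obtain ⟨u, hu, hun⟩ := hC x
  simp only [Matrix.mulVecLin_apply] at hu hun
  refine ⟨x - u, by rw [Matrix.mulVec_sub, hu, sub_self], ?_⟩
  calc ∑ i, |x i - (x - u) i| = ∑ i, ‖u i‖ := by simp [Real.norm_eq_abs]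
    _ ≤ n * ‖u‖ := by simpa using Pi.sum_norm_apply_le_norm u
    _ ≤ n * C * N (A.mulVec x) := by
      rw [mul_assoc]; exact mul_le_mul_of_nonneg_left hun n.cast_nonneg

section SGSums

variable {ι : Type*} [Fintype ι] [DecidableEq ι]

-- `SGCond` and `SGbCond` unfold to inequalities between these two quantities.
def sgLhs (P J : Finset ι) (x : ι → ℝ) : ℝ :=
  ∑ i ∈ J ∩ P, x i + ∑ i ∈ J ∩ Pᶜ, |x i|

def psi (θ t : ℝ) : ℝ := max (-t) (θ * t)

def sgRhs (P : Finset ι) (θ : ℝ) (J : Finset ι) (x : ι → ℝ) : ℝ :=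
  ∑ i ∈ Pᶜ \ J, |x i| + ∑ i ∈ P \ J, psi θ (x i)

lemma psi_le_psi_add_mul_abs_sub {θ : ℝ} (hθ : 1 ≤ θ) (a b : ℝ) :
    psi θ a ≤ psi θ b + θ * |a - b| := by
  unfold psi
  have hab := abs_nonneg (a - b)
  refine max_le ?_ ?_
  · nlinarith [le_max_left (-b) (θ * b), neg_abs_le (a - b)]
  · nlinarith [le_max_right (-b) (θ * b), le_abs_self (a - b)]

lemma sum_add_sum_le_sum_univ {s t : Finset ι} (hst : Disjoint s t) {f : ι → ℝ}
    (hf : ∀ i, 0 ≤ f i) : ∑ i ∈ s, f i + ∑ i ∈ t, f i ≤ ∑ i, f i := by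
  rw [← sum_union hst]
  exact sum_le_univ_sum_of_nonneg hf

lemma sgLhs_le_add_sum_abs_sub (P J : Finset ι) (x y : ι → ℝ) :
    sgLhs P J x ≤ sgLhs P J y + ∑ i, |x i - y i| := by
  have hP : ∑ i ∈ J ∩ P, x i ≤ ∑ i ∈ J ∩ P, y i + ∑ i ∈ J ∩ P, |x i - y i| :=
    (sum_le_sum fun i _ => by linarith [le_abs_self (x i - y i)]).trans_eq sum_add_distrib
  have hPc : ∑ i ∈ J ∩ Pᶜ, |x i| ≤ ∑ i ∈ J ∩ Pᶜ, |y i| + ∑ i ∈ J ∩ Pᶜ, |x i - y i| :=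
    (sum_le_sum fun i _ => by linarith [abs_sub_abs_le_abs_sub (x i) (y i)]).trans_eq
      sum_add_distrib
  have hJ := sum_add_sum_le_sum_univ
    (disjoint_compl_right.mono inter_subset_right inter_subset_right : Disjoint (J ∩ P) (J ∩ Pᶜ))
    fun i => abs_nonneg (x i - y i)
  unfold sgLhs
  linarith

lemma sgRhs_le_add_mul_sum_abs_sub (P : Finset ι) {θ : ℝ} (hθ : 1 ≤ θ) (J : Finset ι)
    (x y : ι → ℝ) :
    sgRhs P θ J y ≤ sgRhs P θ J x + θ * ∑ i, |x i - y i| := by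
  have hPc : ∑ i ∈ Pᶜ \ J, |y i| ≤ ∑ i ∈ Pᶜ \ J, |x i| + θ * ∑ i ∈ Pᶜ \ J, |x i - y i| := by
    rw [mul_sum, ← sum_add_distrib]
    refine sum_le_sum fun i _ => ?_
    linarith [abs_sub_abs_le_abs_sub (y i) (x i), abs_sub_comm (x i) (y i),
      mul_le_mul_of_nonneg_right hθ (abs_nonneg (x i - y i))]
  have hP : ∑ i ∈ P \ J, psi θ (y i) ≤
      ∑ i ∈ P \ J, psi θ (x i) + θ * ∑ i ∈ P \ J, |x i - y i| := by
    rw [mul_sum, ← sum_add_distrib]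
    exact sum_le_sum fun i _ =>
      abs_sub_comm (x i) (y i) ▸ psi_le_psi_add_mul_abs_sub hθ (y i) (x i)
  have hJ := sum_add_sum_le_sum_univ
    (disjoint_compl_left.mono sdiff_subset sdiff_subset : Disjoint (Pᶜ \ J) (P \ J))
    fun i => abs_nonneg (x i - y i)
  unfold sgRhs
  linarith [mul_le_mul_of_nonneg_left hJ (zero_le_one.trans hθ)]

end SGSums

theorem stmt4_general {m n : ℕ} (A : Matrix (Fin m) (Fin n) ℝ) (Pplus : Finset (Fin n))
    (s : ℕ) (ξ θ : ℝ) (hξ0 : 0 < ξ) (hθ : 1 ≤ θ)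
    (N : (Fin m → ℝ) → ℝ) (hN : IsNorm N)
    (h : SGCond A Pplus s ξ θ) :
    ∃ β : ℝ, 0 ≤ β ∧ SGbCond A Pplus s ξ θ β N := by
  obtain ⟨C, hC0, hC⟩ := exists_mulVec_eq_zero_sum_abs_sub_le hN A
  have hcoef : 0 ≤ 1 + ξ * θ := by nlinarith
  refine ⟨(1 + ξ * θ) * C, mul_nonneg hcoef hC0, fun x J hJ => ?_⟩
  obtain ⟨z, hz, hxz⟩ := hC x
  have hsg : sgLhs Pplus J z ≤ ξ * sgRhs Pplus θ J z := h z hz J hJ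
  show sgLhs Pplus J x ≤ (1 + ξ * θ) * C * N (A.mulVec x) + ξ * sgRhs Pplus θ J x
  calc sgLhs Pplus J x
      ≤ ξ * sgRhs Pplus θ J z + ∑ i, |x i - z i| := by
        linarith [sgLhs_le_add_sum_abs_sub Pplus J x z]
    _ ≤ ξ * sgRhs Pplus θ J x + (1 + ξ * θ) * ∑ i, |x i - z i| := by
      linarith [mul_le_mul_of_nonneg_left (sgRhs_le_add_mul_sum_abs_sub Pplus hθ J x z) hξ0.le]
    _ ≤ (1 + ξ * θ) * C * N (A.mulVec x) + ξ * sgRhs Pplus θ J x := by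
      rw [mul_assoc]; linarith [mul_le_mul_of_nonneg_left hxz hcoef]

theorem stmt4 {m n : ℕ} (A : Matrix (Fin m) (Fin n) ℝ) (Pplus : Finset (Fin n))
    (s : ℕ) (hs : 1 ≤ s) (ξ θ : ℝ) (hξ0 : 0 < ξ) (hξ1 : ξ < 1) (hθ : 1 ≤ θ)
    (N : (Fin m → ℝ) → ℝ) (hN : IsNorm N)
    (h : SGCond A Pplus s ξ θ) :
    ∃ β : ℝ, 0 ≤ β ∧ SGbCond A Pplus s ξ θ β N :=
  stmt4_general A Pplus s ξ θ hξ0 hθ N hN h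
end

section
/- Let A be an m×n real matrix satisfying VSG_s(ξ,θ,ρ,σ) with ξ ∈ [0,1), θ ∈ [1,∞), ρ,σ ∈ [0,∞). Then A satisfies SG_{s,β}(ξ,θ) with β = ρ + σ · max{ k_+·(1+θξ) + k_n·(1+ξ) : 0 ≤ k_+ ≤ Card(P_+), 0 ≤ k_n ≤ Card(P_n), k_+ + k_n ≤ s }, and this β satisfies β ≤ ρ + σ·s·(1+θξ). In particular, A is s-semigood. -/
open Finset

/-!
Fix a certificate `(Y, v)`, an `x` and a set `J` with `|J| ≤ s`, and write
`x = (I - YᵀA) x + Yᵀ (A x)`. Choose sign-adapted weights `ε` supported on `J`, in `[0, 1 + θξ]`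
on `P₊` and of modulus at most `1 + ξ` on `Pₙ`, such that `εᵀx` is the left-hand side of the SG
inequality plus `ξ` times the `ψ_θ`/`|·|` penalties of the coordinates in `J`. These bounds give
`εᵀc ≤ Φ_s(c)` for every `c`, so the certificate bounds each coordinate of `εᵀ(I - YᵀA) - (Aᵀv)ᵀ`
and hence `εᵀ(I - YᵀA)x ≤ ρ‖Ax‖ + ξ · (penalties of all coordinates)`, while
`εᵀYᵀAx ≤ σ‖ε‖₁‖Ax‖ ≤ (β - ρ)‖Ax‖`. Cancelling the penalties on `J` leaves `SG_{s,β}`.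
-/

namespace IsNorm

variable {m : ℕ} {N : (Fin m → ℝ) → ℝ}

lemma map_zero (hN : IsNorm N) : N 0 = 0 := by
  simpa using hN.2.1 0 0

lemma map_neg (hN : IsNorm N) (x : Fin m → ℝ) : N (-x) = N x := by
  simpa using hN.2.1 (-1) x

lemma convexOn (hN : IsNorm N) : ConvexOn ℝ Set.univ N := by
  refine ⟨convex_univ, fun x _ y _ a b ha hb _ => ?_⟩
  calc N (a • x + b • y) ≤ N (a • x) + N (b • y) := hN.1 _ _
    _ = a • N x + b • N y := by rw [hN.2.1, hN.2.1, abs_of_nonneg ha, abs_of_nonneg hb]; rfl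

lemma exists_pos_mul_norm_le (hN : IsNorm N) : ∃ c > 0, ∀ x : Fin m → ℝ, c * ‖x‖ ≤ N x := by
  rcases isEmpty_or_nonempty (Fin m) with hm | hm
  · exact ⟨1, one_pos, fun x => by simp [Subsingleton.elim x 0, hN.map_zero]⟩
  obtain ⟨x₀, hx₀, hmin⟩ := (isCompact_sphere (0 : Fin m → ℝ) 1).exists_isMinOn
    (NormedSpace.sphere_nonempty.mpr zero_le_one) hN.continuous.continuousOn
  have hx₀0 : x₀ ≠ 0 := ne_zero_of_mem_unit_sphere ⟨x₀, hx₀⟩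
  refine ⟨N x₀, (hN.nonneg x₀).lt_of_ne fun h => hx₀0 (hN.2.2 x₀ h.symm), fun x => ?_⟩
  rcases eq_or_ne x 0 with rfl | hx
  · simp [hN.map_zero]
  have hxpos : 0 < ‖x‖ := norm_pos_iff.mpr hx
  have hmem : ‖x‖⁻¹ • x ∈ Metric.sphere (0 : Fin m → ℝ) 1 := by
    simp [norm_smul, hxpos.ne']
  have h := hmin hmem
  rw [Set.mem_ofPred_eq, hN.2.1, abs_of_pos (inv_pos.mpr hxpos)] at h
  calc N x₀ * ‖x‖ ≤ ‖x‖⁻¹ * N x * ‖x‖ := mul_le_mul_of_nonneg_right h hxpos.le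
    _ = N x := by field_simp

lemma bddAbove_dotProduct (hN : IsNorm N) (v : Fin m → ℝ) :
    BddAbove {r : ℝ | ∃ x : Fin m → ℝ, N x ≤ 1 ∧ r = ∑ k, v k * x k} := by
  obtain ⟨c, hc, hlow⟩ := hN.exists_pos_mul_norm_le
  refine ⟨(∑ k, |v k|) * c⁻¹, ?_⟩
  rintro _ ⟨x, hx, rfl⟩
  have hxc : ‖x‖ ≤ c⁻¹ := by simpa using (le_inv_mul_iff₀ hc).mpr ((hlow x).trans hx)
  rw [sum_mul]
  refine sum_le_sum fun k _ => ?_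
  calc v k * x k ≤ |v k| * |x k| := by rw [← abs_mul]; exact le_abs_self _
    _ ≤ |v k| * c⁻¹ := by
      gcongr
      exact (norm_le_pi_norm x k).trans hxc

lemma dotProduct_le_dualNorm_mul (hN : IsNorm N) (u w : Fin m → ℝ) :
    u ⬝ᵥ w ≤ dualNorm N u * N w := by
  rcases (hN.nonneg w).eq_or_lt with h | h
  · simp [hN.2.2 w h.symm, hN.map_zero]
  have hmem : (N w)⁻¹ * (u ⬝ᵥ w) ∈
      {r : ℝ | ∃ x : Fin m → ℝ, N x ≤ 1 ∧ r = ∑ k, u k * x k} :=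
    ⟨(N w)⁻¹ • w, by rw [hN.2.1, abs_of_pos (inv_pos.mpr h), inv_mul_cancel₀ h.ne'],
      by change _ = u ⬝ᵥ ((N w)⁻¹ • w); rw [dotProduct_smul, smul_eq_mul]⟩
  have := le_csSup (hN.bddAbove_dotProduct u) hmem
  rw [inv_mul_le_iff₀ h] at this
  unfold dualNorm; linarith

lemma abs_dotProduct_le_dualNorm_mul (hN : IsNorm N) (u w : Fin m → ℝ) :
    |u ⬝ᵥ w| ≤ dualNorm N u * N w := by
  refine abs_le.mpr ⟨?_, hN.dotProduct_le_dualNorm_mul u w⟩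
  have := hN.dotProduct_le_dualNorm_mul u (-w)
  rw [dotProduct_neg, hN.map_neg] at this
  linarith

end IsNorm

open Matrix

section SGTerms

variable {n : ℕ} (Pplus : Finset (Fin n))

/-- The coordinatewise terms of the SG inequality, which reads
`∑ i ∈ J, sgGain Pplus i (x i) ≤ β * N (A *ᵥ x) + ξ * ∑ i ∈ Jᶜ, sgPenalty Pplus θ i (x i)`. -/
def sgGain (i : Fin n) (t : ℝ) : ℝ := if i ∈ Pplus then t else |t|

def sgPenalty (θ : ℝ) (i : Fin n) (t : ℝ) : ℝ := if i ∈ Pplus then max (-t) (θ * t) else |t|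

lemma sum_sgGain (J : Finset (Fin n)) (x : Fin n → ℝ) :
    ∑ i ∈ J, sgGain Pplus i (x i) = ∑ i ∈ J ∩ Pplus, x i + ∑ i ∈ J ∩ Pplusᶜ, |x i| := by
  rw [← sum_filter_add_sum_filter_not J (· ∈ Pplus)]
  congr 1 <;> refine sum_congr (by ext; simp) fun i hi => ?_ <;> simp_all [sgGain]

lemma sum_compl_sgPenalty (θ : ℝ) (J : Finset (Fin n)) (x : Fin n → ℝ) :
    ∑ i ∈ Jᶜ, sgPenalty Pplus θ i (x i) =
      ∑ i ∈ Pplusᶜ \ J, |x i| + ∑ i ∈ Pplus \ J, max (-x i) (θ * x i) := by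
  rw [← sum_filter_not_add_sum_filter Jᶜ (· ∈ Pplus)]
  congr 1 <;> refine sum_congr (by ext; simp [and_comm]) fun i hi => ?_ <;> simp_all [sgPenalty]

end SGTerms

section Conditions

variable {m n : ℕ} {A : Matrix (Fin m) (Fin n) ℝ} {Pplus : Finset (Fin n)} {s : ℕ} {ξ θ : ℝ}

lemma sgbCond_iff {β : ℝ} {N : (Fin m → ℝ) → ℝ} :
    SGbCond A Pplus s ξ θ β N ↔ ∀ x : Fin n → ℝ, ∀ J : Finset (Fin n), J.card ≤ s →
      ∑ i ∈ J, sgGain Pplus i (x i) ≤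
        β * N (A *ᵥ x) + ξ * ∑ i ∈ Jᶜ, sgPenalty Pplus θ i (x i) := by
  simp only [SGbCond, sum_sgGain, sum_compl_sgPenalty]

lemma sgCond_iff :
    SGCond A Pplus s ξ θ ↔ ∀ x : Fin n → ℝ, A *ᵥ x = 0 → ∀ J : Finset (Fin n), J.card ≤ s →
      ∑ i ∈ J, sgGain Pplus i (x i) ≤ ξ * ∑ i ∈ Jᶜ, sgPenalty Pplus θ i (x i) := by
  simp only [SGCond, sum_sgGain, sum_compl_sgPenalty]

lemma SGbCond.sgCond {β : ℝ} {N : (Fin m → ℝ) → ℝ} (h : SGbCond A Pplus s ξ θ β N)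
    (hN : N 0 = 0) : SGCond A Pplus s ξ θ := by
  intro x hx J hJ
  simpa [hx, hN] using h x J hJ

/-- With `J` the support of `w` minus the coordinates of `Pplus` where `z` exceeds `w`, both
sides of the SG inequality for `x = w - z` become `ℓ₁`-norms of `x` on `J` and `Jᶜ`, while
`‖z‖₁ ≤ ‖w‖₁` reverses the comparison. -/
lemma SGCond.semiGood (h : SGCond A Pplus s ξ θ) (hξ : ξ < 1) (hθ : 0 ≤ θ) :
    SemiGood A Pplus s := by
  intro w hw hwP z hAz hzP hz
  set x := w - z with hx_def
  set J := univ.filter fun i => w i ≠ 0 ∧ (i ∈ Pplus → z i ≤ w i)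
  have hJ : J.card ≤ s :=
    (card_le_card (monotone_filter_right _ fun _ _ => And.left)).trans hw
  have hAx : A *ᵥ x = 0 := by rw [hx_def, mulVec_sub, hAz, sub_self]
  have hin : ∀ i ∈ J, sgGain Pplus i (x i) = |x i| := by
    intro i hi
    obtain ⟨-, hiz⟩ := (mem_filter.mp hi).2
    unfold sgGain
    split_ifs with hP
    · exact (abs_of_nonneg (sub_nonneg.mpr (hiz hP))).symm
    · rfl
  have hout : ∀ i ∉ J, sgPenalty Pplus θ i (x i) = |x i| ∧ |w i| - |z i| ≤ -|x i| := by
    intro i hi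
    simp only [J, mem_filter, mem_univ, true_and, not_and_or, not_not, Classical.not_imp,
      not_le] at hi
    simp only [sgPenalty, hx_def, Pi.sub_apply]
    split_ifs with hP
    · have hxi : w i - z i ≤ 0 := by rcases hi with h0 | ⟨-, hlt⟩ <;> linarith [hzP i hP]
      rw [abs_of_nonpos hxi, abs_of_nonneg (hwP i hP), abs_of_nonneg (hzP i hP),
        max_eq_left (by nlinarith)]
      exact ⟨rfl, le_of_eq (by ring)⟩
    · have h0 : w i = 0 := by tauto
      simp [h0]
  have hsg : ∑ i ∈ J, |x i| ≤ ξ * ∑ i ∈ Jᶜ, |x i| := by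
    have := sgCond_iff.mp h x hAx J hJ
    rwa [sum_congr rfl hin, sum_congr rfl fun i hi => (hout i (mem_compl.mp hi)).1] at this
  have hl1 : ∑ i ∈ Jᶜ, |x i| ≤ ∑ i ∈ J, |x i| := by
    have hdiff : 0 ≤ ∑ i, (|w i| - |z i|) := by rw [sum_sub_distrib]; linarith
    rw [← sum_add_sum_compl J] at hdiff
    have h₁ : ∑ i ∈ J, (|w i| - |z i|) ≤ ∑ i ∈ J, |x i| :=
      sum_le_sum fun i _ => abs_sub_abs_le_abs_sub _ _
    have h₂ : ∑ i ∈ Jᶜ, (|w i| - |z i|) ≤ ∑ i ∈ Jᶜ, -|x i| :=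
      sum_le_sum fun i hi => (hout i (mem_compl.mp hi)).2
    rw [sum_neg_distrib] at h₂
    linarith
  have hJ0 : 0 ≤ ∑ i ∈ J, |x i| := sum_nonneg fun _ _ => abs_nonneg _
  have hJc0 : 0 ≤ ∑ i ∈ Jᶜ, |x i| := sum_nonneg fun _ _ => abs_nonneg _
  have hJc : ∑ i ∈ Jᶜ, |x i| = 0 := by
    refine le_antisymm ?_ hJc0
    by_contra! hpos
    nlinarith [mul_lt_mul_of_pos_right hξ hpos]
  have hx0 : ∑ i, |x i| = 0 := by
    rw [← sum_add_sum_compl J, hJc]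
    rw [hJc] at hsg
    linarith
  funext i
  have := (sum_eq_zero_iff_of_nonneg fun i _ => abs_nonneg (x i)).mp hx0 i (mem_univ i)
  rw [abs_eq_zero, hx_def, Pi.sub_apply, sub_eq_zero] at this
  exact this.symm

end Conditions

lemma sum_abs_le_normS1 {n s : ℕ} {J : Finset (Fin n)} (hJ : J.card ≤ s) (x : Fin n → ℝ) :
    ∑ i ∈ J, |x i| ≤ normS1 s x :=
  le_sup' (fun K => ∑ i ∈ K, |x i|) (mem_filter.mpr ⟨mem_powerset.mpr (subset_univ J), hJ⟩)

noncomputable def maxCardWeight (k l s : ℕ) (a b : ℝ) : ℝ :=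
  ((range (k + 1) ×ˢ range (l + 1)).filter (fun p => p.1 + p.2 ≤ s)).sup' ⟨(0, 0), by simp⟩
    (fun p => (p.1 : ℝ) * a + (p.2 : ℝ) * b)

lemma sum_ite_mem_le_maxCardWeight {n s : ℕ} (P : Finset (Fin n)) {J : Finset (Fin n)}
    (hJ : J.card ≤ s) (a b : ℝ) :
    ∑ i ∈ J, (if i ∈ P then a else b) ≤ maxCardWeight P.card Pᶜ.card s a b := by
  rw [sum_ite, sum_const, sum_const, nsmul_eq_mul, nsmul_eq_mul]
  refine le_sup' (fun p : ℕ × ℕ => (p.1 : ℝ) * a + (p.2 : ℝ) * b)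
    (b := ((J.filter (· ∈ P)).card, (J.filter (· ∉ P)).card)) (mem_filter.mpr ⟨?_, ?_⟩)
  · refine mem_product.mpr ⟨mem_range_succ_iff.mpr (card_le_card ?_),
      mem_range_succ_iff.mpr (card_le_card ?_)⟩ <;> intro i hi <;> simp_all
  · rw [card_filter_add_card_filter_not (· ∈ P)]
    exact hJ

lemma maxCardWeight_le {k l s : ℕ} {a b : ℝ} (hb : 0 ≤ b) (hba : b ≤ a) :
    maxCardWeight k l s a b ≤ s * a := by
  refine sup'_le _ _ fun p hp => ?_
  have hs : (p.1 : ℝ) + p.2 ≤ s := by exact_mod_cast (mem_filter.mp hp).2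
  nlinarith [(p.2.cast_nonneg : (0 : ℝ) ≤ p.2)]

section SGWeight

variable {n : ℕ} (Pplus J : Finset (Fin n)) (ξ θ : ℝ) (x : Fin n → ℝ)

noncomputable def sgWeight (i : Fin n) : ℝ :=
  if i ∈ J then
    if i ∈ Pplus then (if 0 ≤ x i then 1 + θ * ξ else 1 - ξ)
    else (if 0 ≤ x i then 1 + ξ else -(1 + ξ))
  else 0

lemma dotProduct_sgWeight_self (hθ : 0 ≤ θ) :
    sgWeight Pplus J ξ θ x ⬝ᵥ x =
      ∑ i ∈ J, (sgGain Pplus i (x i) + ξ * sgPenalty Pplus θ i (x i)) := by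
  rw [dotProduct, ← sum_subset (subset_univ J) fun i _ hi => by simp [sgWeight, hi]]
  refine sum_congr rfl fun i hi => ?_
  simp only [sgWeight, sgGain, sgPenalty, hi, if_true]
  split_ifs with hP hx hx
  · rw [max_eq_right (by nlinarith)]; ring
  · rw [max_eq_left (by nlinarith)]; ring
  · rw [abs_of_nonneg hx]; ring
  · rw [abs_of_neg (not_le.mp hx)]; ring

variable {Pplus J ξ θ}

lemma sgWeight_mul_le (hξ0 : 0 ≤ ξ) (hξ1 : ξ ≤ 1) (hθ : 0 ≤ θ) (i : Fin n) (t : ℝ) :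
    sgWeight Pplus J ξ θ x i * t ≤
      abs (if i ∈ Pplus then (1 + θ * ξ) * max t 0 else (1 + ξ) * |t|) := by
  have hθξ : 0 ≤ θ * ξ := mul_nonneg hθ hξ0
  unfold sgWeight
  split_ifs <;> refine le_trans ?_ (le_abs_self _) <;>
    nlinarith [le_max_left t 0, le_max_right t 0, le_abs_self t, neg_abs_le t]

lemma dotProduct_sgWeight_le_phi {s : ℕ} (hJ : J.card ≤ s) (hξ0 : 0 ≤ ξ) (hξ1 : ξ ≤ 1)
    (hθ : 0 ≤ θ) (c : Fin n → ℝ) :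
    sgWeight Pplus J ξ θ x ⬝ᵥ c ≤ Phi Pplus s ξ θ c := by
  refine le_trans ?_ (sum_abs_le_normS1 hJ _)
  rw [dotProduct, ← sum_subset (subset_univ J) fun i _ hi => by simp [sgWeight, hi]]
  exact sum_le_sum fun i _ => sgWeight_mul_le x hξ0 hξ1 hθ i (c i)

lemma sum_abs_sgWeight_le (hξ0 : 0 ≤ ξ) (hξ1 : ξ ≤ 1) (hθ : 0 ≤ θ) :
    ∑ i, |sgWeight Pplus J ξ θ x i| ≤ ∑ i ∈ J, (if i ∈ Pplus then 1 + θ * ξ else 1 + ξ) := by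
  have hθξ : 0 ≤ θ * ξ := mul_nonneg hθ hξ0
  rw [← sum_subset (subset_univ J) fun i _ hi => by simp [sgWeight, hi]]
  refine sum_le_sum fun i hi => ?_
  simp only [sgWeight, hi, if_true]
  split_ifs <;> rw [abs_le] <;> constructor <;> linarith

end SGWeight

lemma mul_le_mul_max_neg {a d κ t : ℝ} (ha : 0 ≤ a) (h₁ : -a ≤ d) (h₂ : d ≤ κ * a) :
    d * t ≤ a * max (-t) (κ * t) := by
  rcases le_total 0 t with ht | ht
  · calc d * t ≤ κ * a * t := mul_le_mul_of_nonneg_right h₂ ht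
      _ = a * (κ * t) := by ring
      _ ≤ a * max (-t) (κ * t) := mul_le_mul_of_nonneg_left (le_max_right _ _) ha
  · calc d * t ≤ -a * t := mul_le_mul_of_nonpos_right h₁ ht
      _ = a * -t := by ring
      _ ≤ a * max (-t) (κ * t) := mul_le_mul_of_nonneg_left (le_max_left _ _) ha

section Certificate

variable {m n : ℕ} {A : Matrix (Fin m) (Fin n) ℝ} {Pplus : Finset (Fin n)} {s : ℕ}
  {ξ θ ρ σ : ℝ} {N : (Fin m → ℝ) → ℝ} {Y : Matrix (Fin m) (Fin n) ℝ} {v : Fin m → ℝ}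

lemma dotProduct_le_of_vsgCert (hN : IsNorm N) (hξ : 0 ≤ ξ)
    (hcert : VSGCert A Pplus s ξ θ ρ σ N Y v) {ε : Fin n → ℝ}
    (hε : ∀ c, ε ⬝ᵥ c ≤ Phi Pplus s ξ θ c) (x : Fin n → ℝ) :
    ε ⬝ᵥ x ≤ (ρ + σ * ∑ i, |ε i|) * N (A *ᵥ x) + ξ * ∑ j, sgPenalty Pplus θ j (x j) := by
  obtain ⟨hneg, hPn, hP, hY, hv⟩ := hcert
  set C : Matrix (Fin n) (Fin n) ℝ := 1 - Yᵀ * A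
  set w := A *ᵥ x
  have hsplit : ε ⬝ᵥ x = (ε ᵥ* C - Aᵀ *ᵥ v) ⬝ᵥ x + v ⬝ᵥ w + ∑ i, ε i * (Yᵀ i ⬝ᵥ w) := by
    have hx : x = C *ᵥ x + Yᵀ *ᵥ w := by simp [C, w, sub_mulVec, mulVec_mulVec]
    have hAv : (Aᵀ *ᵥ v) ⬝ᵥ x = v ⬝ᵥ w := by rw [mulVec_transpose, ← dotProduct_mulVec]
    have hYw : ε ⬝ᵥ (Yᵀ *ᵥ w) = ∑ i, ε i * (Yᵀ i ⬝ᵥ w) := rfl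
    conv_lhs => rw [hx]
    rw [dotProduct_add, dotProduct_mulVec ε C x, hYw, sub_dotProduct, hAv]
    ring
  have hC : ∀ j, (ε ᵥ* C - Aᵀ *ᵥ v) j * x j ≤ ξ * sgPenalty Pplus θ j (x j) := by
    intro j
    have hup : (ε ᵥ* C) j ≤ Phi Pplus s ξ θ (fun i => C i j) := hε _
    have hlow : -(ε ᵥ* C) j ≤ Phi Pplus s ξ θ (fun i => -C i j) := by
      have h := hε (-fun i => C i j)
      rwa [dotProduct_neg] at h
    have h₁ := hneg j
    simp only [sgPenalty, Pi.sub_apply]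
    split_ifs with hj
    · exact mul_le_mul_max_neg hξ (by linarith) (by linarith [hP j hj])
    · simpa [max_comm, ← abs_eq_max_neg] using
        mul_le_mul_max_neg (κ := 1) (t := x j) hξ (by linarith) (by linarith [hPn j hj])
  have hCx : (ε ᵥ* C - Aᵀ *ᵥ v) ⬝ᵥ x ≤ ξ * ∑ j, sgPenalty Pplus θ j (x j) := by
    rw [mul_sum]; exact sum_le_sum fun j _ => hC j
  have hvw : v ⬝ᵥ w ≤ ρ * N w :=
    (hN.dotProduct_le_dualNorm_mul v w).trans (mul_le_mul_of_nonneg_right hv (hN.nonneg w))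
  have hYw : ∑ i, ε i * (Yᵀ i ⬝ᵥ w) ≤ σ * (∑ i, |ε i|) * N w := by
    rw [mul_comm σ, mul_assoc, sum_mul]
    refine sum_le_sum fun i _ => ?_
    calc ε i * (Yᵀ i ⬝ᵥ w) ≤ |ε i| * |Yᵀ i ⬝ᵥ w| := by rw [← abs_mul]; exact le_abs_self _
      _ ≤ |ε i| * (σ * N w) := by
        gcongr
        exact (hN.abs_dotProduct_le_dualNorm_mul _ _).trans
          (mul_le_mul_of_nonneg_right (hY i) (hN.nonneg w))
  rw [hsplit]
  linarith

theorem sgbCond_of_vsgCert (hN : IsNorm N) (hξ0 : 0 ≤ ξ) (hξ1 : ξ ≤ 1) (hθ : 0 ≤ θ)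
    (hσ : 0 ≤ σ) (hcert : VSGCert A Pplus s ξ θ ρ σ N Y v) :
    SGbCond A Pplus s ξ θ
      (ρ + σ * maxCardWeight Pplus.card Pplusᶜ.card s (1 + θ * ξ) (1 + ξ)) N := by
  refine sgbCond_iff.mpr fun x J hJ => ?_
  have hdot := dotProduct_le_of_vsgCert hN hξ0 hcert
    (dotProduct_sgWeight_le_phi x hJ hξ0 hξ1 hθ) x
  have hΨ := (sum_abs_sgWeight_le x hξ0 hξ1 hθ).trans
    (sum_ite_mem_le_maxCardWeight Pplus hJ (1 + θ * ξ) (1 + ξ))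
  rw [dotProduct_sgWeight_self Pplus J ξ θ x hθ, sum_add_distrib, ← mul_sum,
    ← sum_add_sum_compl J fun i => sgPenalty Pplus θ i (x i), mul_add] at hdot
  linarith [mul_le_mul_of_nonneg_right (mul_le_mul_of_nonneg_left hΨ hσ) (hN.nonneg (A *ᵥ x))]

end Certificate

theorem stmt7 {m n : ℕ} (A : Matrix (Fin m) (Fin n) ℝ) (Pplus : Finset (Fin n))
    (s : ℕ) (ξ θ ρ σ : ℝ)
    (hξ0 : 0 ≤ ξ) (hξ1 : ξ < 1) (hθ : 1 ≤ θ) (hσ : 0 ≤ σ)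
    (N : (Fin m → ℝ) → ℝ) (hN : IsNorm N)
    (h : VSG A Pplus s ξ θ ρ σ N) :
    let β : ℝ := ρ + σ *
      (((Finset.range (Pplus.card + 1) ×ˢ
          Finset.range ((Pplusᶜ : Finset (Fin n)).card + 1)).filter
            (fun p => p.1 + p.2 ≤ s)).sup' ⟨(0, 0), by simp⟩
        (fun p => (p.1 : ℝ) * (1 + θ * ξ) + (p.2 : ℝ) * (1 + ξ)))
    SGbCond A Pplus s ξ θ β N ∧ β ≤ ρ + σ * s * (1 + θ * ξ) ∧ SemiGood A Pplus s := by
  obtain ⟨Y, v, hcert⟩ := h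
  have hsgb := sgbCond_of_vsgCert hN hξ0 hξ1.le (by linarith) hσ hcert
  refine ⟨hsgb, ?_, (hsgb.sgCond hN.map_zero).semiGood hξ1 (by linarith)⟩
  have hΨ : maxCardWeight Pplus.card Pplusᶜ.card s (1 + θ * ξ) (1 + ξ) ≤ s * (1 + θ * ξ) :=
    maxCardWeight_le (by linarith) (by nlinarith)
  show ρ + σ * maxCardWeight Pplus.card Pplusᶜ.card s (1 + θ * ξ) (1 + ξ) ≤ _
  rw [mul_assoc]
  gcongr
end
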